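/- (Entropy rounding.) Let n be a positive integer and 0 ≤ z ≤ n. Define y = ⌈z⌉ if z ≤ n/2 and y = ⌊z⌋ if z > n/2. Then n·H(y/n) ≥ n·H(z/n) - log 5, where H is the binary entropy function. -/

import Mathlib

/-!
Write `y` for the rounded value. Since `binEntropy` is concave with derivative
`log ((1 - q) / q)`, the tangent line at `y / n` gives
`n H(z/n) ≤ n H(y/n) + (y - z) log (y / (n - y))`, and `0 ≤ y - z < 1`. Rounding up below `n/2`
keeps `y < n/2 + 1`, so either `y ≤ n - y` (the log term is `≤ 0`), or `y/(n - y) ≤ 5` as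
`n - y ≥ 1`, or `y = n` (only for `n = 1`, where `H ≤ log 2`). The case `z > n/2` is the mirror
image under `z ↦ n - z`, which exchanges floor and ceiling.
-/

open Finset Real

/-- The binary entropy function. -/
noncomputable def binH (p : ℝ) : ℝ := -(p * Real.log p) - (1 - p) * Real.log (1 - p)

lemma binH_eq_binEntropy : binH = binEntropy := by
  ext p
  simp only [binH, binEntropy, log_inv]
  ring

lemma binEntropy_le_add_mul_log_div {p q : ℝ} (hp : 0 ≤ p) (hpq : p ≤ q) (hq₀ : 0 < q)
    (hq₁ : q < 1) :
    binEntropy p ≤ binEntropy q + (q - p) * log (q / (1 - q)) := by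
  rcases hpq.eq_or_lt with rfl | hpq
  · simp
  have hslope := strictConcave_binEntropy.concaveOn.le_slope_of_hasDerivAt
    ⟨hp, by linarith⟩ ⟨hq₀.le, hq₁.le⟩ hpq (hasDerivAt_binEntropy hq₀.ne' hq₁.ne)
  rw [slope_def_field, le_div_iff₀ (sub_pos.2 hpq)] at hslope
  rw [log_div hq₀.ne' (sub_pos.2 hq₁).ne']
  linarith

lemma mul_binEntropy_div_le_ceil_div_add_log_five {n : ℕ} (hn : 0 < n) {z : ℝ} (hz₀ : 0 ≤ z)
    (hz : z ≤ n / 2) : n * binEntropy (z / n) ≤ n * binEntropy (⌈z⌉ / n) + log 5 := by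
  have hn : (0 : ℝ) < n := by exact_mod_cast hn
  have hlog5 : 0 ≤ log 5 := log_nonneg (by norm_num)
  have hyz : (⌈z⌉ : ℝ) < z + 1 := Int.ceil_lt_add_one z
  rcases (Int.le_ceil z).eq_or_lt with hceil_eq | hzy
  · rw [← hceil_eq]
    linarith
  have hceil_le : ⌈z⌉ ≤ (n : ℤ) := Int.ceil_le.2 (by push_cast; linarith)
  rcases hceil_le.eq_or_lt with hceil_eq | hceil_lt
  · have hn2 : (n : ℝ) < 2 := by
      have : (⌈z⌉ : ℝ) = n := by exact_mod_cast hceil_eq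
      linarith
    rw [hceil_eq, Int.cast_natCast, div_self hn.ne', binEntropy_one, mul_zero, zero_add]
    calc n * binEntropy (z / n) ≤ n * log 2 := by gcongr; exact binEntropy_le_log_two
      _ ≤ 2 * log 2 := by gcongr
      _ ≤ log 5 := by rw [← log_rpow two_pos]; exact log_le_log (by norm_num) (by norm_num)
  have hyn : (⌈z⌉ : ℝ) + 1 ≤ n := by exact_mod_cast hceil_lt
  set y : ℝ := (⌈z⌉ : ℝ)
  have hy₀ : 0 < y := by linarith
  have htangent := binEntropy_le_add_mul_log_div (div_nonneg hz₀ hn.le)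
    (div_le_div_of_nonneg_right hzy.le hn.le) (div_pos hy₀ hn) ((div_lt_one hn).2 (by linarith))
  have hratio : y / n / (1 - y / n) = y / (n - y) := by field_simp
  have hL : log (y / (n - y)) ≤ log 5 := by
    refine log_le_log (div_pos hy₀ (by linarith)) ?_
    rw [div_le_iff₀ (by linarith)]
    linarith
  rw [hratio] at htangent
  calc n * binEntropy (z / n) ≤ n * binEntropy (y / n) + (y - z) * log (y / (n - y)) := by
        have hscale : (n : ℝ) * (y / n - z / n) = y - z := by field_simp
        have := mul_le_mul_of_nonneg_left htangent hn.le
        rwa [mul_add, ← mul_assoc, hscale] at this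
    _ ≤ n * binEntropy (y / n) + (y - z) * log 5 := by gcongr
    _ ≤ n * binEntropy (y / n) + log 5 := by nlinarith

lemma floor_eq_sub_ceil_sub (n : ℕ) (z : ℝ) : (⌊z⌋ : ℝ) = n - (⌈(n : ℝ) - z⌉ : ℝ) := by
  rw [show (n : ℝ) - z = -z + n by ring, Int.ceil_add_natCast, Int.ceil_neg]
  push_cast
  ring

/-- entropy rounding: rounding `z` to the integer `y = ⌈z⌉` if `z ≤ n/2`,
`y = ⌊z⌋` otherwise, loses at most `log 5` in `n·H(·/n)`. -/
theorem entropy_rounding (n : ℕ) (hn : 0 < n) (z : ℝ) (hz0 : 0 ≤ z) (hzn : z ≤ n) :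
    (n : ℝ) * binH (z / n) - Real.log 5
      ≤ (n : ℝ) * binH ((if z ≤ n / 2 then (⌈z⌉ : ℝ) else (⌊z⌋ : ℝ)) / n) := by
  rw [binH_eq_binEntropy, sub_le_iff_le_add]
  split_ifs with hz
  · exact mul_binEntropy_div_le_ceil_div_add_log_five hn hz0 hz
  · have hn' : (n : ℝ) ≠ 0 := by positivity
    have hsymm : ∀ w : ℝ, binEntropy (w / n) = binEntropy ((n - w) / n) := fun w ↦ by
      rw [sub_div, div_self hn', binEntropy_one_sub]
    rw [hsymm z, hsymm ⌊z⌋, floor_eq_sub_ceil_sub n z, sub_sub_cancel]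
    exact mul_binEntropy_div_le_ceil_div_add_log_five hn (by linarith) (by linarith)
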